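/- Let G be a connected simple graph of order n ≥ 3 and let M(G) be its middle graph. Then Aut(G) ≅ Aut(M(G)) as abstract groups. -/

import Mathlib

open SimpleGraph

/-- The subdivision graph `S(G)`: each edge `{u,v}` of `G` is replaced by a new
vertex (the element of `G.edgeSet`) adjacent to both `u` and `v`. -/
def subdivisionGraph {V : Type*} (G : SimpleGraph V) : SimpleGraph (V ⊕ G.edgeSet) where
  Adj x y :=
    match x, y with
    | Sum.inl u, Sum.inr e => u ∈ (e : Sym2 V)
    | Sum.inr e, Sum.inl u => u ∈ (e : Sym2 V)
    | _, _ => False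
  symm := ⟨by rintro (u | e) (v | f) h <;> simp_all⟩
  loopless := ⟨by rintro (u | e) h <;> simp_all⟩

/-- The central graph `C(G)`: obtained from the subdivision graph `S(G)` by joining
every pair of distinct vertices of `G` that are non-adjacent in `G`. -/
def centralGraph {V : Type*} (G : SimpleGraph V) : SimpleGraph (V ⊕ G.edgeSet) where
  Adj x y :=
    match x, y with
    | Sum.inl u, Sum.inl v => u ≠ v ∧ ¬ G.Adj u v
    | Sum.inl u, Sum.inr e => u ∈ (e : Sym2 V)
    | Sum.inr e, Sum.inl u => u ∈ (e : Sym2 V)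
    | Sum.inr _, Sum.inr _ => False
  symm := by
    constructor
    rintro (u | e) (v | f) h
    · exact ⟨h.1.symm, fun a => h.2 a.symm⟩
    · exact h
    · exact h
    · exact h
  loopless := by
    constructor
    rintro (u | e) h
    · exact h.1 rfl
    · exact h

/-- The middle graph `M(G)`: obtained from the subdivision graph `S(G)` by joining
each pair of distinct subdivided vertices corresponding to adjacent edges of `G`. -/
def middleGraph {V : Type*} (G : SimpleGraph V) : SimpleGraph (V ⊕ G.edgeSet) where
  Adj x y :=
    match x, y with
    | Sum.inl u, Sum.inr e => u ∈ (e : Sym2 V)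
    | Sum.inr e, Sum.inl u => u ∈ (e : Sym2 V)
    | Sum.inr e, Sum.inr f => e ≠ f ∧ ∃ u, u ∈ (e : Sym2 V) ∧ u ∈ (f : Sym2 V)
    | Sum.inl _, Sum.inl _ => False
  symm := by
    constructor
    rintro (u | e) (v | f) h
    · exact h
    · exact h
    · exact h
    · exact ⟨h.1.symm, h.2.imp fun u hu => ⟨hu.2, hu.1⟩⟩
  loopless := by
    constructor
    rintro (u | e) h
    · exact h
    · exact h.1 rfl

/-- The line graph `L(G)`: vertices are the edges of `G`, two distinct edges being
adjacent when they share an endpoint. -/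
def lineG {V : Type*} (G : SimpleGraph V) : SimpleGraph G.edgeSet where
  Adj e f := e ≠ f ∧ ∃ u, u ∈ (e : Sym2 V) ∧ u ∈ (f : Sym2 V)
  symm := ⟨fun e f h => ⟨h.1.symm, h.2.imp fun u hu => ⟨hu.2, hu.1⟩⟩⟩
  loopless := ⟨fun e h => h.1 rfl⟩

/-- The endline graph `G⁺`: to each vertex `v` of `G` we attach a new pendant
vertex; `Sum.inl` is the copy of `V(G)` and `Sum.inr` are the new vertices. -/
def endlineGraph {V : Type*} (G : SimpleGraph V) : SimpleGraph (V ⊕ V) where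
  Adj x y :=
    match x, y with
    | Sum.inl u, Sum.inl v => G.Adj u v
    | Sum.inl u, Sum.inr v => u = v
    | Sum.inr u, Sum.inl v => u = v
    | Sum.inr _, Sum.inr _ => False
  symm := by
    constructor
    rintro (u | u) (v | v) h
    · exact h.symm
    · exact h.symm
    · exact h.symm
    · exact h
  loopless := by
    constructor
    rintro (u | u) h
    · exact G.irrefl h
    · exact h

/-- The join `G₁ + G₂` of two vertex-disjoint graphs: their disjoint union together
with all edges between the two vertex sets. -/
def joinGraph {V₁ V₂ : Type*} (G₁ : SimpleGraph V₁) (G₂ : SimpleGraph V₂) :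
    SimpleGraph (V₁ ⊕ V₂) where
  Adj x y :=
    match x, y with
    | Sum.inl u, Sum.inl v => G₁.Adj u v
    | Sum.inr u, Sum.inr v => G₂.Adj u v
    | Sum.inl _, Sum.inr _ => True
    | Sum.inr _, Sum.inl _ => True
  symm := by
    constructor
    rintro (u | u) (v | v) h
    · exact h.symm
    · trivial
    · trivial
    · exact h.symm
  loopless := by
    constructor
    rintro (u | u) h
    · exact G₁.irrefl h
    · exact G₂.irrefl h

/-- The maximum degree `Δ(H)` of a graph (as a supremum of cardinalities of
neighborhoods, which agrees with the usual maximum degree for finite graphs). -/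
noncomputable def maxDeg {W : Type*} (H : SimpleGraph W) : ℕ :=
  sSup {k | ∃ v : W, k = (H.neighborSet v).ncard}

/-- A graph is regular if all vertices have the same degree. -/
def IsRegularGraph {W : Type*} (H : SimpleGraph W) : Prop :=
  ∀ u v : W, (H.neighborSet u).ncard = (H.neighborSet v).ncard

/-- The distinguishing number `D(H)`: the least `d` such that `H` admits a vertex
coloring with `d` colors preserved only by the identity automorphism. -/
noncomputable def distinguishingNumber {W : Type*} (H : SimpleGraph W) : ℕ :=
  sInf {d | ∃ c : W → Fin d, ∀ φ : H ≃g H, (∀ v, c (φ v) = c v) → ∀ v, φ v = v}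

/-- The distinguishing index `D'(H)`: the least `d` such that `H` admits an edge
coloring with `d` colors preserved only by the identity automorphism. -/
noncomputable def distinguishingIndex {W : Type*} (H : SimpleGraph W) : ℕ :=
  sInf {d | ∃ c : H.edgeSet → Fin d,
    ∀ φ : H ≃g H, (∀ e, c (φ.mapEdgeSet e) = c e) → ∀ v, φ v = v}

/-- A proper total coloring of `H` with `d` colors: adjacent vertices, adjacent
edges, and incident vertex/edge pairs receive distinct colors. -/
def IsProperTotalColoring {W : Type*} (H : SimpleGraph W) {d : ℕ}
    (f : W ⊕ H.edgeSet → Fin d) : Prop :=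
  (∀ u v : W, H.Adj u v → f (Sum.inl u) ≠ f (Sum.inl v)) ∧
  (∀ e e' : H.edgeSet, e ≠ e' → (∃ u, u ∈ (e : Sym2 W) ∧ u ∈ (e' : Sym2 W)) →
    f (Sum.inr e) ≠ f (Sum.inr e')) ∧
  (∀ (v : W) (e : H.edgeSet), v ∈ (e : Sym2 W) → f (Sum.inl v) ≠ f (Sum.inr e))

/-- An automorphism `φ` preserves a total coloring `f`. -/
def PreservesTotalColoring {W : Type*} (H : SimpleGraph W) {d : ℕ}
    (f : W ⊕ H.edgeSet → Fin d) (φ : H ≃g H) : Prop :=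
  (∀ v : W, f (Sum.inl (φ v)) = f (Sum.inl v)) ∧
  (∀ e : H.edgeSet, f (Sum.inr (φ.mapEdgeSet e)) = f (Sum.inr e))

/-- The total chromatic number `χ''(H)`. -/
noncomputable def totalChromaticNumber {W : Type*} (H : SimpleGraph W) : ℕ :=
  sInf {d | ∃ f : W ⊕ H.edgeSet → Fin d, IsProperTotalColoring H f}

/-- The total distinguishing chromatic number `χ''_D(H)`: the least `d` such that
`H` has a proper total coloring with `d` colors preserved only by the identity. -/
noncomputable def totalDistinguishingChromaticNumber {W : Type*} (H : SimpleGraph W) : ℕ :=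
  sInf {d | ∃ f : W ⊕ H.edgeSet → Fin d, IsProperTotalColoring H f ∧
    ∀ φ : H ≃g H, PreservesTotalColoring H f φ → ∀ v, φ v = v}

/-- The color class `C_H(u)` of a vertex under a total coloring: the color of `u`
together with the colors of the edges incident to `u`. -/
def totalColorClass {W : Type*} (H : SimpleGraph W) {d : ℕ}
    (f : W ⊕ H.edgeSet → Fin d) (u : W) : Set (Fin d) :=
  {f (Sum.inl u)} ∪ {x | ∃ e : H.edgeSet, u ∈ (e : Sym2 W) ∧ x = f (Sum.inr e)}

/-- An AVD-total coloring: a proper total coloring in which adjacent vertices have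
distinct color classes. -/
def IsAVDTotalColoring {W : Type*} (H : SimpleGraph W) {d : ℕ}
    (f : W ⊕ H.edgeSet → Fin d) : Prop :=
  IsProperTotalColoring H f ∧
  ∀ u v : W, H.Adj u v → totalColorClass H f u ≠ totalColorClass H f v

/-- The AVD-total chromatic number `χ''ₐ(H)`. -/
noncomputable def avdTotalChromaticNumber {W : Type*} (H : SimpleGraph W) : ℕ :=
  sInf {d | ∃ f : W ⊕ H.edgeSet → Fin d, IsAVDTotalColoring H f}

/-- A total dominator coloring: a proper vertex coloring such that every vertex is
adjacent to every vertex of some (nonempty) color class. -/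
def IsTotalDominatorColoring {W : Type*} (H : SimpleGraph W) {d : ℕ}
    (c : W → Fin d) : Prop :=
  (∀ u v : W, H.Adj u v → c u ≠ c v) ∧
  (∀ v : W, ∃ i : Fin d, (∃ w, c w = i) ∧ ∀ w, c w = i → H.Adj v w)

/-- The total dominator chromatic number `χᵗ_d(H)`. -/
noncomputable def tdChromaticNumber {W : Type*} (H : SimpleGraph W) : ℕ :=
  sInf {d | ∃ c : W → Fin d, IsTotalDominatorColoring H c}

/-! In `M(G)` the neighbourhood of an original vertex `u` is a clique (the edges at `u` pairwise
meet in `u`), whereas an edge vertex `{a, b}` has the two non-adjacent neighbours `a` and `b`.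
Hence every automorphism of `M(G)` maps `V(G)` onto itself. Two original vertices are adjacent in
`G` iff they have a common neighbour in `M(G)`, and this common neighbour is then unique; so the
restriction to `V(G)` is an automorphism of `G` and determines the automorphism of `M(G)`.
Conversely every automorphism of `G` acts on `V(G) ⊕ E(G)` as an automorphism of `M(G)`. -/

open Function

theorem Sym2.apply_mem_map_iff {α β : Type*} {f : α → β} (hf : Injective f) {a : α} {z : Sym2 α} :
    f a ∈ z.map f ↔ a ∈ z := by
  rw [Sym2.mem_map]
  exact ⟨fun ⟨b, hb, hba⟩ => hf hba ▸ hb, fun h => ⟨a, h, rfl⟩⟩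

theorem SimpleGraph.Iso.isClique_neighborSet_iff {V W : Type*} {G : SimpleGraph V}
    {H : SimpleGraph W} (ψ : G ≃g H) (v : V) :
    H.IsClique (H.neighborSet (ψ v)) ↔ G.IsClique (G.neighborSet v) := by
  have adj_on : (H.Adj on ψ) = G.Adj := by
    ext
    exact ψ.map_adj_iff
  rw [← ψ.image_neighborSet, IsClique, ψ.injective.injOn.pairwise_image, adj_on]

namespace middleGraph

variable {V W : Type*} {G : SimpleGraph V} {H : SimpleGraph W}

theorem isClique_neighborSet_inl (u : V) :
    (middleGraph G).IsClique ((middleGraph G).neighborSet (.inl u)) := by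
  rintro (v | e) hv (w | f) hw hne
  · exact hv.elim
  · exact hv.elim
  · exact hw.elim
  · exact ⟨fun h => hne (congrArg Sum.inr h), u, hv, hw⟩

theorem not_isClique_neighborSet_inr (e : G.edgeSet) :
    ¬ (middleGraph G).IsClique ((middleGraph G).neighborSet (.inr e)) := by
  obtain ⟨⟨a, b⟩, hab⟩ := e
  intro h
  exact h (x := .inl a) (Sym2.mem_mk_left a b) (y := .inl b) (Sym2.mem_mk_right a b)
    (Sum.inl_injective.ne hab.ne)

theorem isLeft_apply (ψ : middleGraph G ≃g middleGraph H) (x : V ⊕ G.edgeSet) :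
    (ψ x).isLeft = x.isLeft := by
  have key := ψ.isClique_neighborSet_iff x
  rcases x with u | e <;> rcases hx : ψ _ with v | f <;> rw [hx] at key
  · rfl
  · exact absurd (key.2 (isClique_neighborSet_inl u)) (not_isClique_neighborSet_inr f)
  · exact absurd (key.1 (isClique_neighborSet_inl v)) (not_isClique_neighborSet_inr e)
  · rfl

theorem adj_iff_exists_adj_inl (a b : V) :
    G.Adj a b ↔ a ≠ b ∧ ∃ x, (middleGraph G).Adj (.inl a) x ∧ (middleGraph G).Adj (.inl b) x := by
  constructor
  · intro h
    exact ⟨h.ne, .inr ⟨s(a, b), h⟩, Sym2.mem_mk_left a b, Sym2.mem_mk_right a b⟩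
  · rintro ⟨hne, v | ⟨e, he⟩, ha, hb⟩
    · exact ha.elim
    · obtain rfl : e = s(a, b) := (Sym2.mem_and_mem_iff hne).1 ⟨ha, hb⟩
      exact he

theorem eq_of_adj_inl_of_adj_inl {a b : V} (hne : a ≠ b) {x y : V ⊕ G.edgeSet}
    (hxa : (middleGraph G).Adj (.inl a) x) (hxb : (middleGraph G).Adj (.inl b) x)
    (hya : (middleGraph G).Adj (.inl a) y) (hyb : (middleGraph G).Adj (.inl b) y) : x = y := by
  rcases x with v | e
  · exact hxa.elim
  rcases y with w | f
  · exact hya.elim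
  exact congrArg Sum.inr (Subtype.ext (Sym2.eq_of_ne_mem hne hxa hxb hya hyb))

def vertexMap (ψ : middleGraph G ≃g middleGraph H) (u : V) : W :=
  (ψ (.inl u)).getLeft (by rw [isLeft_apply]; rfl)

@[simp]
theorem inl_vertexMap (ψ : middleGraph G ≃g middleGraph H) (u : V) :
    Sum.inl (vertexMap ψ u) = ψ (.inl u) :=
  Sum.inl_getLeft _ _

@[simp]
theorem vertexMap_symm_vertexMap (ψ : middleGraph G ≃g middleGraph H) (u : V) :
    vertexMap ψ.symm (vertexMap ψ u) = u :=
  Sum.inl_injective (by rw [inl_vertexMap, inl_vertexMap, ψ.symm_apply_apply])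

theorem vertexMap_injective (ψ : middleGraph G ≃g middleGraph H) : Injective (vertexMap ψ) :=
  LeftInverse.injective (vertexMap_symm_vertexMap ψ)

theorem vertexMap_adj (ψ : middleGraph G ≃g middleGraph H) {a b : V} (h : G.Adj a b) :
    H.Adj (vertexMap ψ a) (vertexMap ψ b) := by
  obtain ⟨hne, x, ha, hb⟩ := (adj_iff_exists_adj_inl a b).1 h
  refine (adj_iff_exists_adj_inl _ _).2 ⟨(vertexMap_injective ψ).ne hne, ψ x, ?_, ?_⟩
  · rwa [inl_vertexMap, ψ.map_adj_iff]
  · rwa [inl_vertexMap, ψ.map_adj_iff]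

theorem iso_ext {ψ φ : middleGraph G ≃g middleGraph H} (h : ∀ u, ψ (.inl u) = φ (.inl u)) :
    ψ = φ := by
  ext x
  rcases x with u | ⟨⟨a, b⟩, hab⟩
  · exact h u
  apply eq_of_adj_inl_of_adj_inl ((vertexMap_injective ψ).ne hab.ne)
  · rw [inl_vertexMap, ψ.map_adj_iff]
    exact Sym2.mem_mk_left a b
  · rw [inl_vertexMap, ψ.map_adj_iff]
    exact Sym2.mem_mk_right a b
  · rw [inl_vertexMap, h, φ.map_adj_iff]
    exact Sym2.mem_mk_left a b
  · rw [inl_vertexMap, h, φ.map_adj_iff]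
    exact Sym2.mem_mk_right a b

end middleGraph

open middleGraph

def SimpleGraph.Iso.ofMiddleGraph {V W : Type*} {G : SimpleGraph V} {H : SimpleGraph W}
    (ψ : middleGraph G ≃g middleGraph H) : G ≃g H where
  toFun := vertexMap ψ
  invFun := vertexMap ψ.symm
  left_inv := vertexMap_symm_vertexMap ψ
  right_inv := vertexMap_symm_vertexMap ψ.symm
  map_rel_iff' {a b} := ⟨fun h => by
    simpa using vertexMap_adj ψ.symm (a := vertexMap ψ a) (b := vertexMap ψ b) h, vertexMap_adj ψ⟩

def SimpleGraph.Iso.middleGraph {V W : Type*} {G : SimpleGraph V} {H : SimpleGraph W}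
    (σ : G ≃g H) : middleGraph G ≃g middleGraph H where
  toEquiv := σ.toEquiv.sumCongr σ.mapEdgeSet
  map_rel_iff' := by
    rintro (u | e) (v | f)
    · exact Iff.rfl
    · exact Sym2.apply_mem_map_iff σ.injective
    · exact Sym2.apply_mem_map_iff σ.injective
    · show σ.mapEdgeSet e ≠ σ.mapEdgeSet f ∧ _ ↔ _
      rw [σ.mapEdgeSet.injective.ne_iff, σ.surjective.exists]
      simp only [Iso.mapEdgeSet_apply, Hom.mapEdgeSet_coe, RelEmbedding.coe_toRelHom,
        RelIso.coe_toRelEmbedding, Sym2.apply_mem_map_iff σ.injective]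
      rfl

def middleGraph.isoEquiv {V W : Type*} {G : SimpleGraph V} {H : SimpleGraph W} :
    (G ≃g H) ≃ (middleGraph G ≃g middleGraph H) where
  toFun := Iso.middleGraph
  invFun := Iso.ofMiddleGraph
  left_inv σ := RelIso.ext fun u => Sum.inl_injective (inl_vertexMap (Iso.middleGraph σ) u)
  right_inv ψ := iso_ext (inl_vertexMap ψ)

def middleGraph.autMulEquiv {V : Type*} (G : SimpleGraph V) :
    (G ≃g G) ≃* (middleGraph G ≃g middleGraph G) :=
  { middleGraph.isoEquiv with map_mul' := fun _ _ => iso_ext fun _ => rfl }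

theorem stmt_4_general {V : Type*} (G : SimpleGraph V) :
    Nonempty ((G ≃g G) ≃* (middleGraph G ≃g middleGraph G)) :=
  ⟨middleGraph.autMulEquiv G⟩

/-- For a connected graph `G` of order at least `3`,
`Aut(G) ≅ Aut(M(G))` as abstract groups. -/
theorem stmt_4 {V : Type*} [Fintype V] (G : SimpleGraph V)
    (hconn : G.Connected) (hn : 3 ≤ Fintype.card V) :
    Nonempty ((G ≃g G) ≃* (middleGraph G ≃g middleGraph G)) :=
  stmt_4_general G
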